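/- Let (X,d) be a complete metric space and S = (f_1,...,f_n) a GIFS of order m with address map g : Ω → X. For every x = (x_1,...,x_m) ∈ X^m and every α ∈ Ω, the sequence (f_{α|_k}(x^k))_k converges to g(α), where x^1 = x and x^{k+1} = (x^k,...,x^k) (m copies). In particular the limit does not depend on x. -/

import Mathlib

open Filter Topology NNReal ENNReal

/-- The levels of the code space: `Ω_1 = {1,…,n}`, `Ω_{k+1} = (Ω_k)^m`
(here indexed from `0`). -/
def OmegaL (n m : ℕ) : ℕ → Type
  | 0 => Fin n
  | k + 1 => Fin m → OmegaL n m k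

/-- The code space `Ω = Π_k Ω_k`. -/
abbrev CodeSpace (n m : ℕ) : Type := ∀ k : ℕ, OmegaL n m k

instance OmegaL.decEq (n m : ℕ) : ∀ k, DecidableEq (OmegaL n m k)
  | 0 => inferInstanceAs (DecidableEq (Fin n))
  | k + 1 => letI := OmegaL.decEq n m k
             inferInstanceAs (DecidableEq (Fin m → OmegaL n m k))

instance OmegaL.fintype (n m : ℕ) : ∀ k, Fintype (OmegaL n m k)
  | 0 => inferInstanceAs (Fintype (Fin n))
  | k + 1 => letI := OmegaL.fintype n m k
             inferInstanceAs (Fintype (Fin m → OmegaL n m k))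

instance OmegaL.topologicalSpace (n m k : ℕ) : TopologicalSpace (OmegaL n m k) := ⊥

instance OmegaL.discreteTopology (n m k : ℕ) : DiscreteTopology (OmegaL n m k) := ⟨rfl⟩

/-- The metric `d(α,β) = Σ_k d_k(α^k,β^k)/(m+1)^{k+1}` on `Ω`,
where `d_k` is the 0-1 (discrete) metric on `Ω_k`. -/
noncomputable def codeDist {n m : ℕ} (α β : CodeSpace n m) : ℝ :=
  ∑' k : ℕ, (if α k = β k then 0 else 1) / (m + 1) ^ (k + 1)

/-- The shift maps `τ_j : Ω^m → Ω`,
`τ_j(α_1,…,α_m) = (j, (α_1^1,…,α_m^1), (α_1^2,…,α_m^2), …)`. -/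
def tau {n m : ℕ} (j : Fin n) (a : Fin m → CodeSpace n m) : CodeSpace n m :=
  fun k => match k with
  | 0 => j
  | k + 1 => fun i => a i k

/-- The iterated product spaces `X_1 = X^m`, `X_{k+1} = (X_k)^m`
(indexed from `0`). -/
def Xk (X : Type*) (m : ℕ) : ℕ → Type _
  | 0 => Fin m → X
  | k + 1 => Fin m → Xk X m k

/-- For a code `α = (α^1, α^2, …)`, the code `α(i) = (α^2_i, α^3_i, …)`. -/
def shiftCode {n m : ℕ} (α : CodeSpace n m) (i : Fin m) : CodeSpace n m :=
  fun k => (α (k + 1) : Fin m → OmegaL n m k) i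

/-- The maps `f_α : X_{k+1} → X` for `α` (a code restricted to its first `k+1`
symbols): `f_{(α^1)} = f_{α^1}` and
`f_α(x_1,…,x_m) = f_{α^1}(f_{α(1)}(x_1),…,f_{α(m)}(x_m))`. -/
def fA {X : Type*} {n m : ℕ} (f : Fin n → (Fin m → X) → X) :
    ∀ k : ℕ, CodeSpace n m → Xk X m k → X
  | 0, α, x => f (α 0) x
  | k + 1, α, x => f (α 0) (fun i => fA f k (shiftCode α i) ((x : Fin m → Xk X m k) i))

/-- The iterated products `K_1 = K^m`, `K_{k+1} = (K_k)^m` of a set `K ⊆ X`. -/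
def Spow {X : Type*} (m : ℕ) (K : Set X) : ∀ k : ℕ, Set (Xk X m k)
  | 0 => Set.univ.pi fun _ => K
  | k + 1 => (Set.univ.pi fun _ => Spow m K k : Set (Fin m → Xk X m k))

/-- The diagonal points `x^1 = x`, `x^{k+1} = (x^k,…,x^k)`. -/
def diag {X : Type*} {m : ℕ} (x : Fin m → X) : ∀ k : ℕ, Xk X m k
  | 0 => x
  | k + 1 => (fun _ => diag x k : Fin m → Xk X m k)

/-- Extending a code `α` (thought of as its first `k+1` symbols `α^1,…,α^{k+1}`)
by a new symbol `β ∈ Ω_{k+2}`: the concatenation `α ⌢ β`. -/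
def extendCode {n m : ℕ} (α : CodeSpace n m) (k : ℕ) (β : OmegaL n m (k + 1)) :
    CodeSpace n m :=
  fun j => if h : j = k + 1 then cast (congrArg (OmegaL n m) h.symm) β else α j

/-! The maps `f_{α|_k}` are `φ^[k+1]`-contractions of `X_k`, `g α = f_{α|_k}(y)` for some
`y ∈ A_k`, and the diagonal points `x^k` stay within a fixed distance `C` of `A_k` (any bound
on `A ∪ {x_1,…,x_m}`). Hence `d(f_{α|_k}(x^k), g α) ≤ φ^[k+1](C)`, which tends to `0` by the
Boyd–Wong argument for `φ`. -/

noncomputable instance Xk.instPseudoMetricSpace {X : Type*} [PseudoMetricSpace X] {m : ℕ} :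
    ∀ k, PseudoMetricSpace (Xk X m k)
  | 0 => inferInstanceAs (PseudoMetricSpace (Fin m → X))
  | k + 1 => @pseudoMetricSpacePi (Fin m) (fun _ => Xk X m k) _
      (fun _ => Xk.instPseudoMetricSpace (X := X) (m := m) k)

theorem NNReal.tendsto_iterate_nhds_zero_of_lt_self {φ : ℝ≥0 → ℝ≥0} (hmono : Monotone φ)
    (husc : UpperSemicontinuous φ) (hlt : ∀ t : ℝ≥0, 0 < t → φ t < t) (C : ℝ≥0) :
    Tendsto (fun k : ℕ => φ^[k] C) atTop (𝓝 0) := by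
  have hle : ∀ t, φ t ≤ t := by
    intro t
    rcases (zero_le (a := t)).eq_or_lt with rfl | ht
    · by_contra! h0
      exact (hlt _ h0).not_ge (hmono h0.le)
    · exact (hlt t ht).le
  have hanti : Antitone fun k : ℕ => φ^[k] C :=
    antitone_nat_of_succ_le fun k => by
      rw [Function.iterate_succ_apply']
      exact hle _
  set L := ⨅ k : ℕ, φ^[k] C
  have hL : Tendsto (fun k : ℕ => φ^[k] C) atTop (𝓝 L) :=
    tendsto_atTop_ciInf hanti (OrderBot.bddBelow _)
  suffices L = 0 by rwa [this] at hL
  by_contra hL0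
  -- upper semicontinuity at `L > 0` pushes the orbit strictly below its own infimum
  obtain ⟨y, hφy, hyL⟩ := exists_between (hlt L (pos_iff_ne_zero.mpr hL0))
  obtain ⟨k, hk⟩ := (hL.eventually (husc L y hφy)).exists
  have hLk : L ≤ φ^[k + 1] C := ciInf_le (OrderBot.bddBelow _) (k + 1)
  rw [Function.iterate_succ_apply'] at hLk
  exact (hLk.trans_lt (hk.trans hyL)).false

section Iterates

variable {X : Type*} [PseudoMetricSpace X] {n m : ℕ}

theorem nndist_fA_le {φ : ℝ≥0 → ℝ≥0} (hmono : Monotone φ) {f : Fin n → (Fin m → X) → X}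
    (hf : ∀ i, ∀ x y : Fin m → X, nndist (f i x) (f i y) ≤ φ (nndist x y)) :
    ∀ (k : ℕ) (α : CodeSpace n m) (u v : Xk X m k),
      nndist (fA f k α u) (fA f k α v) ≤ φ^[k + 1] (nndist u v)
  | 0, α, u, v => hf (α 0) u v
  | k + 1, α, u, v => by
    have hinner : nndist (fun i => fA f k (shiftCode α i) ((u : Fin m → Xk X m k) i))
        (fun i => fA f k (shiftCode α i) ((v : Fin m → Xk X m k) i))
        ≤ φ^[k + 1] (nndist u v) :=
      nndist_pi_le_iff.mpr fun i => (nndist_fA_le hmono hf k (shiftCode α i) _ _).trans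
        (hmono.iterate (k + 1) (nndist_le_pi_nndist (u : Fin m → Xk X m k) v i))
    calc nndist (fA f (k + 1) α u) (fA f (k + 1) α v)
        ≤ φ (φ^[k + 1] (nndist u v)) := (hf (α 0) _ _).trans (hmono hinner)
      _ = φ^[k + 2] (nndist u v) := (Function.iterate_succ_apply' φ (k + 1) _).symm

theorem nndist_diag_le {A : Set X} {x : Fin m → X} {C : ℝ≥0}
    (hC : ∀ i, ∀ a ∈ A, nndist (x i) a ≤ C) :
    ∀ (k : ℕ) (y : Xk X m k), y ∈ Spow m A k → nndist (diag x k) y ≤ C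
  | 0, y, hy => nndist_pi_le_iff.mpr fun i => hC i (y i) (hy i trivial)
  | k + 1, y, hy => nndist_pi_le_iff.mpr fun i =>
      nndist_diag_le hC k ((y : Fin m → Xk X m k) i) (hy i trivial)

end Iterates

theorem code_iterates_tendsto_general
    {X : Type*} [MetricSpace X]
    {n m : ℕ}
    (φ : ℝ≥0 → ℝ≥0)
    (hmono : Monotone φ) (husc : UpperSemicontinuous φ)
    (hlt : ∀ t : ℝ≥0, 0 < t → φ t < t)
    (f : Fin n → (Fin m → X) → X)
    (hf : ∀ i, ∀ x y : Fin m → X, nndist (f i x) (f i y) ≤ φ (nndist x y))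
    (A : Set X) (hAc : IsCompact A)
    (g : CodeSpace n m → X)
    (hg : ∀ α : CodeSpace n m, (⋂ k : ℕ, fA f k α '' Spow m A k) = {g α})
    (x : Fin m → X) (α : CodeSpace n m) :
    Tendsto (fun k : ℕ => fA f k α (diag x k)) atTop (𝓝 (g α)) := by
  obtain ⟨C, hC⟩ := Metric.isBounded_iff_nndist.mp
    (hAc.isBounded.union (Set.finite_range x).isBounded)
  have hbound : ∀ k, dist (fA f k α (diag x k)) (g α) ≤ φ^[k + 1] C := by
    intro k
    obtain ⟨y, hy, hgy⟩ : g α ∈ fA f k α '' Spow m A k :=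
      Set.mem_iInter.mp ((hg α).symm ▸ Set.mem_singleton (g α)) k
    rw [dist_nndist, ← hgy, NNReal.coe_le_coe]
    exact (nndist_fA_le hmono hf k α _ _).trans <| hmono.iterate (k + 1) <|
      nndist_diag_le (fun i a ha => hC (Or.inr ⟨i, rfl⟩) (Or.inl ha)) k y hy
  have hφ : Tendsto (fun k : ℕ => (φ^[k + 1] C : ℝ)) atTop (𝓝 0) :=
    NNReal.tendsto_coe.mpr <| (NNReal.tendsto_iterate_nhds_zero_of_lt_self hmono husc hlt C).comp
      (tendsto_add_atTop_nat 1)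
  exact tendsto_iff_dist_tendsto_zero.mpr (squeeze_zero (fun _ => dist_nonneg) hbound hφ)

/-- For every `x = (x_1,…,x_m) ∈ X^m` and every `α ∈ Ω`, the
sequence `f_{α|_k}(x^k)` (with `x^1 = x`, `x^{k+1} = (x^k,…,x^k)`) converges to
`g α`; in particular the limit does not depend on `x`. -/
theorem code_iterates_tendsto
    {X : Type*} [MetricSpace X] [CompleteSpace X]
    {n m : ℕ} (hn : 0 < n) (hm : 0 < m)
    (φ : ℝ≥0 → ℝ≥0)
    (hmono : Monotone φ) (husc : UpperSemicontinuous φ)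
    (hlt : ∀ t : ℝ≥0, 0 < t → φ t < t)
    (f : Fin n → (Fin m → X) → X)
    (hf : ∀ i, ∀ x y : Fin m → X, nndist (f i x) (f i y) ≤ φ (nndist x y))
    (A : Set X) (hAne : A.Nonempty) (hAc : IsCompact A)
    (hAfix : (⋃ i, f i '' Set.univ.pi fun _ => A) = A)
    (g : CodeSpace n m → X)
    (hg : ∀ α : CodeSpace n m, (⋂ k : ℕ, fA f k α '' Spow m A k) = {g α})
    (x : Fin m → X) (α : CodeSpace n m) :
    Tendsto (fun k : ℕ => fA f k α (diag x k)) atTop (𝓝 (g α)) :=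
  code_iterates_tendsto_general φ hmono husc hlt f hf A hAc g hg x α
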